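/- arXiv:1812.05685 — 4 statements merged into one kernel-verified Lean document; each statement's English description precedes it below -/
import Mathlib

section
/- Let K be a finitely generated projective R-module, V an R-module, and σ : K → V an R-linear map. If the dual map σ^∨ : V^∨ → K^∨ is surjective, then σ admits a retraction: there exists an R-linear map r : V → K with r ∘ σ = id_K. In particular, σ is a split injection. -/
namespace LinearMap

theorem exists_comp_eq_of_dualMap_surjective {R K V ι : Type*} [CommSemiring R]
    [AddCommMonoid K] [Module R K] [AddCommMonoid V] [Module R V]
    {σ : K →ₗ[R] V} (h : Function.Surjective σ.dualMap) (f : K →ₗ[R] ι → R) :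
    ∃ g : V →ₗ[R] ι → R, g ∘ₗ σ = f := by
  choose g hg using fun i => h (proj i ∘ₗ f)
  refine ⟨pi g, ?_⟩
  calc pi g ∘ₗ σ = pi (fun i => σ.dualMap (g i)) := pi_comp g σ
    _ = pi (proj · ∘ₗ f) := congrArg pi (funext hg)
    _ = f := pi_proj_comp f

end LinearMap

/-- Let `K` be a finitely generated projective `R`-module, `V` an
`R`-module, and `σ : K → V` an `R`-linear map. If the dual map
`σ^∨ : V^∨ → K^∨` is surjective, then `σ` admits a retraction `r : V → K` with
`r ∘ σ = id`; in particular `σ` is a split injection. -/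
theorem retraction_of_dualMap_surjective
    {R : Type} [CommRing R]
    {K V : Type} [AddCommGroup K] [Module R K] [AddCommGroup V] [Module R V]
    [Module.Finite R K] [Module.Projective R K]
    (σ : K →ₗ[R] V)
    (h : Function.Surjective σ.dualMap) :
    ∃ r : V →ₗ[R] K, r ∘ₗ σ = LinearMap.id := by
  obtain ⟨n, π, s, -, -, hπs⟩ := Module.Finite.exists_comp_eq_id_of_projective R K
  obtain ⟨g, hgσ⟩ := LinearMap.exists_comp_eq_of_dualMap_surjective h s
  exact ⟨π ∘ₗ g, by rw [LinearMap.comp_assoc, hgσ, hπs]⟩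
end

section
/- Let σ : K → V be an injective R-linear map between finite free R-modules, let L := V/σ(K), and let E := coker(σ^∨ : V^∨ → K^∨). Then the support of E equals the non-free locus of L: Supp(E) = { p ∈ Spec R : the localization L_p is not a free R_p-module }. (Here Supp(E) is the set of primes p with E_p ≠ 0.) -/
/-!
Localization is exact and, for finitely presented modules, commutes with taking duals, so `E_p`
is the cokernel of the dual of `σ_p : K_p → V_p`, while `L_p ≅ V_p / σ_p(K_p)`. Over a local
ring, `σ_p^∨` is surjective iff `σ_p` has a left inverse (as `K_p` is reflexive with projective
dual), iff `0 → K_p → V_p → L_p → 0` splits, iff `L_p` is projective, iff `L_p` is free.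
-/

open Module LinearMap

theorem LinearMap.exists_leftInverse_iff_projective_quotient {R K V : Type*} [Ring R]
    [AddCommGroup K] [Module R K] [AddCommGroup V] [Module R V] [Projective R V]
    {f : K →ₗ[R] V} (hf : Function.Injective f) :
    (∃ r : V →ₗ[R] K, r ∘ₗ f = id) ↔ Projective R (V ⧸ range f) := by
  have splittings : (∃ l, (range f).mkQ ∘ₗ l = id) ↔ ∃ r : V →ₗ[R] K, r ∘ₗ f = id :=
    (f.exact_map_mkQ_range.split_tfae hf (Submodule.mkQ_surjective _)).out 0 1
  rw [← splittings]
  exact ⟨fun ⟨l, hl⟩ ↦ .of_split l _ hl,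
    fun _ ↦ projective_lifting_property _ _ (Submodule.mkQ_surjective _)⟩

section Dual

variable {R K V : Type*} [CommRing R] [AddCommGroup K] [Module R K] [AddCommGroup V] [Module R V]

theorem LinearMap.dualMap_surjective_iff_exists_leftInverse [Module.Finite R K] [Projective R K]
    (f : K →ₗ[R] V) : Function.Surjective f.dualMap ↔ ∃ r : V →ₗ[R] K, r ∘ₗ f = id := by
  refine ⟨fun hf ↦ ?_, fun ⟨r, hr⟩ φ ↦ ⟨φ ∘ₗ r, by rw [dualMap_apply', comp_assoc, hr, comp_id]⟩⟩
  obtain ⟨s, hs⟩ := projective_lifting_property f.dualMap id hf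
  refine ⟨(evalEquiv R K).symm.toLinearMap ∘ₗ s.dualMap ∘ₗ Dual.eval R V, ?_⟩
  ext k
  apply (evalEquiv R K).injective
  ext φ
  simpa using congr($hs φ k)

theorem LinearMap.dualMap_surjective_iff_free_quotient [IsLocalRing R] [Module.Finite R K]
    [Projective R K] [Module.Finite R V] [Projective R V] {f : K →ₗ[R] V}
    (hf : Function.Injective f) : Function.Surjective f.dualMap ↔ Free R (V ⧸ range f) := by
  rw [f.dualMap_surjective_iff_exists_leftInverse, exists_leftInverse_iff_projective_quotient hf]
  exact ⟨fun _ ↦ free_of_flat_of_isLocalRing, fun _ ↦ inferInstance⟩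

end Dual

section Localization

variable {R : Type*} [CommRing R] (S : Submonoid R) {M N : Type*} [AddCommGroup M] [Module R M]
  [AddCommGroup N] [Module R N]

variable (M) in
noncomputable def Module.Dual.localize :
    Dual R M →ₗ[R] Dual (Localization S) (LocalizedModule S M) :=
  IsLocalizedModule.mapExtendScalars S (LocalizedModule.mkLinearMap S M)
    (Algebra.linearMap R (Localization S)) (Localization S)

instance [FinitePresentation R M] : IsLocalizedModule S (Dual.localize S M) := by
  unfold Dual.localize
  infer_instance

theorem LinearMap.isLocalizedModuleMap_dualMap [FinitePresentation R M] [FinitePresentation R N]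
    (f : M →ₗ[R] N) :
    IsLocalizedModule.map S (Dual.localize S N) (Dual.localize S M) f.dualMap =
      (LocalizedModule.map S f).dualMap.restrictScalars R := by
  apply IsLocalizedModule.ext S (Dual.localize S N)
    (IsLocalizedModule.map_units (Dual.localize S M))
  rw [IsLocalizedModule.map_comp]
  ext φ : 1
  apply LinearMap.restrictScalars_injective R
  apply IsLocalizedModule.ext S (LocalizedModule.mkLinearMap S M)
    (IsLocalizedModule.map_units (Algebra.linearMap R (Localization S)))
  ext x
  have hx : LocalizedModule.map S f (LocalizedModule.mkLinearMap S M x) =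
      LocalizedModule.mkLinearMap S N (f x) := LocalizedModule.map_mk S f x 1
  simp only [comp_apply, Dual.localize, IsLocalizedModule.map_apply, coe_restrictScalars,
    dualMap_apply, IsLocalizedModule.mapExtendScalars_apply_apply, hx]

theorem LinearMap.localizedModuleMap_dualMap_surjective_iff [FinitePresentation R M]
    [FinitePresentation R N] (f : M →ₗ[R] N) :
    Function.Surjective (LocalizedModule.map S f.dualMap) ↔
      Function.Surjective (LocalizedModule.map S f).dualMap := by
  rw [← IsLocalizedModule.map_surjective_iff_localizedModuleMap_surjective (Dual.localize S N)
    (Dual.localize S M), isLocalizedModuleMap_dualMap]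
  rfl

noncomputable def LocalizedModule.quotientRangeEquiv (f : M →ₗ[R] N) :
    LocalizedModule S (N ⧸ range f) ≃ₗ[Localization S]
      LocalizedModule S N ⧸ range (LocalizedModule.map S f) :=
  (localizedQuotientEquiv S (range f)).symm ≪≫ₗ Submodule.quotEquivOfEq _ _
    (localized'_range_eq_range_localizedMap _ S _ _ f)

end Localization

/-- Let `σ : K → V` be an injective `R`-linear map between finite free
`R`-modules, `L := V/σ(K)`, and `E := coker(σ^∨ : V^∨ → K^∨)`. Then the support of `E`
(the set of primes `p` with `E_p ≠ 0`) equals the non-free locus of `L`: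
`Supp(E) = { p ∈ Spec R : L_p is not a free R_p-module }`. -/
theorem support_cokernel_dual_eq_nonfree_locus
    {R : Type} [CommRing R]
    {K V : Type} [AddCommGroup K] [Module R K] [AddCommGroup V] [Module R V]
    [Module.Free R K] [Module.Finite R K] [Module.Free R V] [Module.Finite R V]
    (σ : K →ₗ[R] V) (hσ : Function.Injective σ) :
    Module.support R ((Module.Dual R K) ⧸ LinearMap.range σ.dualMap) =
      { p : PrimeSpectrum R |
        ¬ Module.Free (Localization.AtPrime p.asIdeal)
            (LocalizedModule p.asIdeal.primeCompl (V ⧸ LinearMap.range σ)) } := by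
  have := finitePresentation_of_projective R K
  have := finitePresentation_of_projective R V
  ext p
  rw [mem_support_iff, Set.mem_ofPred_eq, ← not_subsingleton_iff_nontrivial,
    ← localizedMap_surjective_iff_subsingleton_localized_coker,
    localizedModuleMap_dualMap_surjective_iff,
    dualMap_surjective_iff_free_quotient (LocalizedModule.map_injective _ σ hσ),
    Free.iff_of_equiv (LocalizedModule.quotientRangeEquiv _ σ)]
end

section
/- Let σ : K → V be an injective R-linear map between finite free R-modules of ranks k and N respectively, and let L := V/σ(K). For every prime ideal p of R, with residue field κ(p) of R_p, the fiber dimension satisfies dim_{κ(p)}(L ⊗_R κ(p)) ≥ N − k, and equality holds if and only if the localization L_p is a free R_p-module; in that case L_p is free of rank N − k. -/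
open TensorProduct

open LinearMap Module in
noncomputable def cokerBaseChangeEquiv (R A : Type) {M N : Type} [CommRing R] [CommRing A] [Algebra R A]
    [AddCommGroup M] [Module R M] [AddCommGroup N] [Module R N] (f : M →ₗ[R] N) :
    ((A ⊗[R] N) ⧸ LinearMap.range (f.baseChange A)) ≃ₗ[A] A ⊗[R] (N ⧸ LinearMap.range f) := by
  have hsurj : Function.Surjective ((LinearMap.range f).mkQ.baseChange A) :=
    LinearMap.lTensor_surjective A (Submodule.mkQ_surjective _)
  have hker : LinearMap.ker ((LinearMap.range f).mkQ.baseChange A)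
      = LinearMap.range (f.baseChange A) := by
    have h := lTensor_exact A f.exact_map_mkQ_range (Submodule.mkQ_surjective _)
    ext x
    rw [LinearMap.mem_ker, LinearMap.mem_range]
    exact (h x).trans Iff.rfl
  exact (Submodule.quotEquivOfEq _ _ hker.symm) ≪≫ₗ
    ((LinearMap.range f).mkQ.baseChange A).quotKerEquivOfSurjective hsurj

theorem fiber_dim_local {A : Type} [CommRing A] [IsLocalRing A]
    {M N : Type} [AddCommGroup M] [Module A M] [AddCommGroup N] [Module A N]
    [Module.Free A M] [Module.Finite A M] [Module.Free A N] [Module.Finite A N]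
    (f : M →ₗ[A] N) (hf : Function.Injective f) (k n : ℕ)
    (hk : Module.finrank A M = k) (hn : Module.finrank A N = n) :
    n - k ≤ Module.finrank (IsLocalRing.ResidueField A)
        ((IsLocalRing.ResidueField A) ⊗[A] (N ⧸ LinearMap.range f)) ∧
    (Module.finrank (IsLocalRing.ResidueField A)
        ((IsLocalRing.ResidueField A) ⊗[A] (N ⧸ LinearMap.range f)) = n - k ↔
      Module.Free A (N ⧸ LinearMap.range f)) ∧
    (Module.Free A (N ⧸ LinearMap.range f) →
      Module.finrank A (N ⧸ LinearMap.range f) = n - k) := by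
  have hkn : k ≤ n := hk ▸ hn ▸ LinearMap.finrank_le_finrank_of_injective hf
  have partc : Module.Free A (N ⧸ LinearMap.range f) →
      Module.finrank A (N ⧸ LinearMap.range f) = n - k := by
    intro hfree
    obtain ⟨s, hs⟩ := Module.projective_lifting_property (LinearMap.range f).mkQ LinearMap.id
      (Submodule.mkQ_surjective _)
    obtain ⟨e, -⟩ := (f.exact_map_mkQ_range.splitSurjectiveEquiv hf).toFun ⟨s, hs⟩
    have h1 : Module.finrank A N = Module.finrank A (M × (N ⧸ LinearMap.range f)) := e.finrank_eq
    rw [Module.finrank_prod, hk, hn] at h1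
    omega
  set r : ℕ :=
    Module.finrank (IsLocalRing.ResidueField A)
      (LinearMap.range (f.baseChange (IsLocalRing.ResidueField A))) with hr
  have hfiber : Module.finrank (IsLocalRing.ResidueField A)
      ((IsLocalRing.ResidueField A) ⊗[A] (N ⧸ LinearMap.range f)) + r = n := by
    rw [(LinearEquiv.finrank_eq (cokerBaseChangeEquiv A (IsLocalRing.ResidueField A) f)).symm,
      hr, Submodule.finrank_quotient_add_finrank, Module.finrank_baseChange, hn]
  have hrle : r ≤ k := by
    have := (f.baseChange (IsLocalRing.ResidueField A)).finrank_range_le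
    rwa [Module.finrank_baseChange, hk] at this
  have hinj : r = k → Function.Injective (f.baseChange (IsLocalRing.ResidueField A)) := by
    intro h
    have hrn := (f.baseChange (IsLocalRing.ResidueField A)).finrank_range_add_finrank_ker
    rw [Module.finrank_baseChange, hk, ← hr, h] at hrn
    rw [← LinearMap.ker_eq_bot, ← Submodule.finrank_eq_zero
      (R := IsLocalRing.ResidueField A)]
    omega
  refine ⟨by omega, ⟨fun heq ↦ ?_, fun hfree ↦ ?_⟩, partc⟩
  · exact Module.free_of_lTensor_residueField_injective f (LinearMap.range f).mkQ
      (Submodule.mkQ_surjective _) f.exact_map_mkQ_range (hinj (by omega))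
  · rw [Module.finrank_baseChange, partc hfree]



/-- Let `σ : K → V` be an injective `R`-linear map between finite free
`R`-modules of ranks `k` and `N`, and `L := V/σ(K)`. For every prime `p` of `R`, with
residue field `κ(p)` of `R_p`, the fiber dimension satisfies
`dim_{κ(p)}(L ⊗_R κ(p)) ≥ N − k`, with equality iff `L_p` is a free `R_p`-module;
and in that case `L_p` is free of rank `N − k`. -/
theorem fiber_dimension_of_cokernel
    {R : Type} [CommRing R]
    {K V : Type} [AddCommGroup K] [Module R K] [AddCommGroup V] [Module R V]
    [Module.Free R K] [Module.Finite R K] [Module.Free R V] [Module.Finite R V]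
    (k N : ℕ) (hk : Module.finrank R K = k) (hN : Module.finrank R V = N)
    (σ : K →ₗ[R] V) (hσ : Function.Injective σ)
    (p : PrimeSpectrum R) :
    N - k ≤ Module.finrank (IsLocalRing.ResidueField (Localization.AtPrime p.asIdeal))
        ((IsLocalRing.ResidueField (Localization.AtPrime p.asIdeal)) ⊗[R]
          (V ⧸ LinearMap.range σ)) ∧
    (Module.finrank (IsLocalRing.ResidueField (Localization.AtPrime p.asIdeal))
        ((IsLocalRing.ResidueField (Localization.AtPrime p.asIdeal)) ⊗[R]
          (V ⧸ LinearMap.range σ)) = N - k ↔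
      Module.Free (Localization.AtPrime p.asIdeal)
        (LocalizedModule p.asIdeal.primeCompl (V ⧸ LinearMap.range σ))) ∧
    (Module.Free (Localization.AtPrime p.asIdeal)
        (LocalizedModule p.asIdeal.primeCompl (V ⧸ LinearMap.range σ)) →
      Module.finrank (Localization.AtPrime p.asIdeal)
        (LocalizedModule p.asIdeal.primeCompl (V ⧸ LinearMap.range σ)) = N - k) := by
  haveI : Nontrivial R := by
    rcases subsingleton_or_nontrivial R with h | h
    · exact absurd (Subsingleton.elim p.asIdeal ⊤) p.2.ne_top
    · exact h
  let A := Localization.AtPrime p.asIdeal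
  let F := IsLocalRing.ResidueField A
  have hσA : Function.Injective (σ.baseChange A) :=
    Module.Flat.lTensor_preserves_injective_linearMap (M := A) σ hσ
  -- the main result for the localized situation
  obtain ⟨h1, h2, h3⟩ := fiber_dim_local (σ.baseChange A) hσA k N
    (by rw [Module.finrank_baseChange, hk]) (by rw [Module.finrank_baseChange, hN])
  -- identify the localized module with the base-changed cokernel
  let eQ : LocalizedModule p.asIdeal.primeCompl (V ⧸ LinearMap.range σ) ≃ₗ[A]
      (A ⊗[R] V) ⧸ LinearMap.range (σ.baseChange A) :=
    ((IsLocalizedModule.isBaseChange p.asIdeal.primeCompl A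
        (LocalizedModule.mkLinearMap p.asIdeal.primeCompl (V ⧸ LinearMap.range σ))).equiv).symm
      ≪≫ₗ (cokerBaseChangeEquiv R A σ).symm
  -- identify the fibers
  have hF : Module.finrank F (F ⊗[R] (V ⧸ LinearMap.range σ))
      = Module.finrank F (F ⊗[A] ((A ⊗[R] V) ⧸ LinearMap.range (σ.baseChange A))) :=
    LinearEquiv.finrank_eq <|
      (AlgebraTensorModule.cancelBaseChange R A F F (V ⧸ LinearMap.range σ)).symm
        ≪≫ₗ ((cokerBaseChangeEquiv R A σ).symm.baseChange A F _ _)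
  have hFree : Module.Free A
        (LocalizedModule p.asIdeal.primeCompl (V ⧸ LinearMap.range σ)) ↔
      Module.Free A ((A ⊗[R] V) ⧸ LinearMap.range (σ.baseChange A)) :=
    ⟨fun h ↦ Module.Free.of_equiv eQ, fun h ↦ Module.Free.of_equiv eQ.symm⟩
  refine ⟨hF ▸ h1, ?_, fun hfree ↦ ?_⟩
  · rw [hF, hFree]
    exact h2
  · rw [eQ.finrank_eq]
    exact h3 (hFree.mp hfree)
end

section
/- Let σ : K → V be an injective R-linear map between finite free R-modules of ranks k and N respectively, and let L := V/σ(K). Then the support of the cokernel of the dual map σ^∨ : V^∨ → K^∨ equals the degeneracy locus { p ∈ Spec R : dim_{κ(p)}(L ⊗_R κ(p)) > N − k }, where κ(p) is the residue field of R_p. -/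
/-!
By Nakayama's lemma, `p` lies in the support of `coker σ^∨` iff `σ^∨ ⊗ κ(p)` is not surjective.
For finite free modules dualizing commutes with base change, so `σ^∨ ⊗ κ(p)` is the dual of
`σ ⊗ κ(p)` and is surjective iff `σ ⊗ κ(p)` is injective. By right exactness of `⊗ κ(p)`,
`L ⊗ κ(p)` is the cokernel of `σ ⊗ κ(p)`, of dimension `N - k + dim ker (σ ⊗ κ(p))`; here
`k ≤ N` because `σ` is injective.
-/

open TensorProduct Module

section BaseChange

variable {R : Type*} [CommRing R] {W X : Type*} [AddCommGroup W] [Module R W]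
  [AddCommGroup X] [Module R X] (A : Type*) [CommRing A] [Algebra R A] (τ : W →ₗ[R] X)

theorem LinearMap.exact_baseChange_mkQ_range :
    Function.Exact (τ.baseChange A) ((LinearMap.range τ).mkQ.baseChange A) := by
  rw [LinearMap.baseChange_eq_ltensor, LinearMap.baseChange_eq_ltensor]
  exact lTensor_exact A (LinearMap.exact_map_mkQ_range τ) (Submodule.mkQ_surjective _)

noncomputable def LinearMap.quotientRangeBaseChangeEquiv :
    ((A ⊗[R] X) ⧸ LinearMap.range (τ.baseChange A)) ≃ₗ[A] A ⊗[R] (X ⧸ LinearMap.range τ) :=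
  (τ.exact_baseChange_mkQ_range A).linearEquivOfSurjective
    (LinearMap.baseChange_surjective A (Submodule.mkQ_surjective _))

theorem LinearMap.mem_support_quotient_range_iff [Module.Finite R X] (p : PrimeSpectrum R) :
    p ∈ Module.support R (X ⧸ LinearMap.range τ) ↔
      ¬ Function.Surjective (τ.baseChange p.asIdeal.ResidueField) := by
  rw [Module.mem_support_iff_nontrivial_residueField_tensorProduct,
    ← (τ.quotientRangeBaseChangeEquiv _).nontrivial_congr, ← not_subsingleton_iff_nontrivial,
    Submodule.Quotient.subsingleton_iff, LinearMap.range_eq_top]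

end BaseChange

section Dual

variable {R : Type*} [CommRing R] {K V : Type*} [AddCommGroup K] [Module R K]
  [AddCommGroup V] [Module R V] [Free R K] [Module.Finite R K] [Free R V] [Module.Finite R V]
  (A : Type*) [CommRing A] [Algebra R A] (σ : K →ₗ[R] V)

theorem LinearMap.toDualBaseChange_comp_baseChange_dualMap :
    (TensorProduct.isBaseChange R K A).toDualBaseChange.toLinearMap ∘ₗ σ.dualMap.baseChange A =
      (σ.baseChange A).dualMap ∘ₗ
        (TensorProduct.isBaseChange R V A).toDualBaseChange.toLinearMap := by
  ext f v
  have hK := (TensorProduct.isBaseChange R K A).toDualBaseChange_tmul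
  have hV := (TensorProduct.isBaseChange R V A).toDualBaseChange_tmul
  simp only [TensorProduct.mk_apply] at hK hV
  simp only [AlgebraTensorModule.curry_apply, LinearMap.restrictScalars_comp, curry_apply,
    LinearMap.coe_comp, LinearMap.coe_restrictScalars, LinearEquiv.coe_coe, Function.comp_apply,
    LinearMap.baseChange_tmul, hK, LinearMap.dualMap_apply, one_mul, hV]

theorem LinearMap.surjective_baseChange_dualMap_iff (F : Type*) [Field F] [Algebra R F] :
    Function.Surjective (σ.dualMap.baseChange F) ↔ Function.Injective (σ.baseChange F) := by
  rw [← LinearMap.dualMap_surjective_iff,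
    ← EquivLike.comp_surjective _ (TensorProduct.isBaseChange R K F).toDualBaseChange,
    ← EquivLike.surjective_comp (TensorProduct.isBaseChange R V F).toDualBaseChange]
  exact Iff.of_eq <|
    congrArg _ (congrArg DFunLike.coe (σ.toDualBaseChange_comp_baseChange_dualMap F))

end Dual

theorem LinearMap.not_injective_iff_finrank_sub_lt_finrank_quotient_range {F M₁ M₂ : Type*}
    [Field F] [AddCommGroup M₁] [Module F M₁] [AddCommGroup M₂] [Module F M₂]
    [FiniteDimensional F M₁] [FiniteDimensional F M₂] (f : M₁ →ₗ[F] M₂)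
    (h : finrank F M₁ ≤ finrank F M₂) :
    ¬ Function.Injective f ↔ finrank F M₂ - finrank F M₁ < finrank F (M₂ ⧸ LinearMap.range f) := by
  have hquot := (LinearMap.range f).finrank_quotient_add_finrank
  have hrank := f.finrank_range_add_finrank_ker
  rw [← LinearMap.ker_eq_bot, ← Submodule.finrank_eq_zero]
  omega

/-- Let `σ : K → V` be an injective `R`-linear map between finite free
`R`-modules of ranks `k` and `N`, and `L := V/σ(K)`. Then the support of the cokernel of
the dual map `σ^∨ : V^∨ → K^∨` equals the degeneracy locus
`{ p ∈ Spec R : dim_{κ(p)}(L ⊗_R κ(p)) > N − k }`. -/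
theorem support_cokernel_dual_eq_degeneracy_locus
    {R : Type} [CommRing R]
    {K V : Type} [AddCommGroup K] [Module R K] [AddCommGroup V] [Module R V]
    [Module.Free R K] [Module.Finite R K] [Module.Free R V] [Module.Finite R V]
    (k N : ℕ) (hk : Module.finrank R K = k) (hN : Module.finrank R V = N)
    (σ : K →ₗ[R] V) (hσ : Function.Injective σ) :
    Module.support R ((Module.Dual R K) ⧸ LinearMap.range σ.dualMap) =
      { p : PrimeSpectrum R |
        N - k < Module.finrank (IsLocalRing.ResidueField (Localization.AtPrime p.asIdeal))
          ((IsLocalRing.ResidueField (Localization.AtPrime p.asIdeal)) ⊗[R]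
            (V ⧸ LinearMap.range σ)) } := by
  ext p
  set F := p.asIdeal.ResidueField
  have : Nontrivial R := p.nontrivial
  have hdim : finrank F (F ⊗[R] K) ≤ finrank F (F ⊗[R] V) := by
    simpa only [finrank_baseChange, hk, hN] using LinearMap.finrank_le_finrank_of_injective hσ
  rw [Set.mem_ofPred_eq, σ.dualMap.mem_support_quotient_range_iff,
    σ.surjective_baseChange_dualMap_iff,
    (σ.baseChange F).not_injective_iff_finrank_sub_lt_finrank_quotient_range hdim,
    (σ.quotientRangeBaseChangeEquiv F).finrank_eq, finrank_baseChange, finrank_baseChange, hk, hN]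
end
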